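/- arXiv:2012.10370 — 2 statements merged into one kernel-verified Lean document; each statement's English description precedes it below -/
import Mathlib

section
/- For every p ≥ 1, μ ∈ P_p(ℝ^d) compactly supported and N ≥ d+1, one has e_{p,N}(μ) = W_p(μ, P(ℝ^d,N)) ≤ W_p(μ, P_{≥μ}(ℝ^d,N)) ≤ d_{p,N}(μ): the primal quantization error is bounded above by the Wasserstein distance to convex-order-dominating N-point measures, itself bounded by the dual quantization error. -/
open MeasureTheory Set

noncomputable section

abbrev Ed (d : ℕ) := EuclideanSpace ℝ (Fin d)

variable {E : Type*} [NormedAddCommGroup E] [NormedSpace ℝ E] [MeasurableSpace E] [BorelSpace E]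

/-- A coupling between `μ` and `ν`. -/
def IsCoupling (π : Measure (E × E)) (μ ν : Measure E) : Prop :=
  π.map Prod.fst = μ ∧ π.map Prod.snd = ν

/-- A martingale coupling between `μ` and `ν` : a probability coupling such that the
conditional expectation of the second coordinate given the first is the first. -/
def IsMartingaleCoupling (π : Measure (E × E)) (μ ν : Measure E) : Prop :=
  IsProbabilityMeasure π ∧ IsCoupling π μ ν ∧
    ∀ A : Set E, MeasurableSet A →
      ∫ q in A ×ˢ (univ : Set E), (q.2 - q.1) ∂π = 0

/-- The convex order `μ ≤_cvx ν`. -/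
def ConvexOrder (μ ν : Measure E) : Prop :=
  ∀ φ : E → ℝ, ConvexOn ℝ univ φ → Integrable φ μ → Integrable φ ν →
    ∫ x, φ x ∂μ ≤ ∫ x, φ x ∂ν

/-- The `p`-th power transport cost of a coupling. -/
def pCost (p : ℝ) (π : Measure (E × E)) : ℝ := ∫ q, ‖q.2 - q.1‖ ^ p ∂π

/-- `W_p(μ,ν)^p`. -/
def WpPow (p : ℝ) (μ ν : Measure E) : ℝ :=
  sInf {c | ∃ π : Measure (E × E), IsProbabilityMeasure π ∧ IsCoupling π μ ν ∧ c = pCost p π}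

/-- The Wasserstein distance `W_p(μ,ν)`. -/
def Wp (p : ℝ) (μ ν : Measure E) : ℝ := WpPow p μ ν ^ (1 / p)

/-- `M_p(μ,ν)^p` : the martingale transport cost. -/
def MpPow (p : ℝ) (μ ν : Measure E) : ℝ :=
  sInf {c | ∃ π : Measure (E × E), IsMartingaleCoupling π μ ν ∧ c = pCost p π}

/-- `M_p(μ,ν)`. -/
def Mp (p : ℝ) (μ ν : Measure E) : ℝ := MpPow p μ ν ^ (1 / p)

/-- A Borel nearest-neighbour projection onto the finite set `Γ`. -/
def IsNearestProj (Γ : Finset E) (f : E → E) : Prop :=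
  Measurable f ∧ ∀ x, f x ∈ Γ ∧ ‖x - f x‖ = Metric.infDist x (Γ : Set E)

/-- `e_p(Γ,μ)^p`, the `p`-th power quantization error on the grid `Γ`. -/
def quantErrPow (p : ℝ) (Γ : Finset E) (μ : Measure E) : ℝ :=
  ∫ x, Metric.infDist x (Γ : Set E) ^ p ∂μ

/-- `Γ` is an `L^p`-optimal `N`-quantizer of `μ`. -/
def IsOptimalQuantizer (p : ℝ) (N : ℕ) (Γ : Finset E) (μ : Measure E) : Prop :=
  Γ.Nonempty ∧ Γ.card ≤ N ∧
    ∀ Γ' : Finset E, Γ'.Nonempty → Γ'.card ≤ N → quantErrPow p Γ μ ≤ quantErrPow p Γ' μ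

/-- `ν` is supported on at most `N` points. -/
def SuppLE (N : ℕ) (ν : Measure E) : Prop :=
  ∃ s : Finset E, s.card ≤ N ∧ ν ((s : Set E)ᶜ) = 0

/-!
Optimal quantization is the Wasserstein projection onto measures with at most `N` atoms: a Borel
nearest-neighbour projection onto a grid `Γ` transports `μ` at cost `e_p(Γ, μ)^p`, and conversely
every coupling of `μ` with a measure carried by a finite set `s` costs at least `e_p(s, μ)^p`.
The two inequalities are inclusions of the admissible sets together with `W_p ≤ M_p`, once these
sets are known to be nonempty. For that, enclose the support of `μ` in a simplex with `d + 1`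
vertices and split the mass at `x` among the vertices according to the barycentric coordinates
of `x`: the resulting coupling is a martingale one, and its second marginal dominates `μ` in the
convex order by Jensen's inequality.
-/

theorem Continuous.integrable_of_measure_compl_eq_zero {X F : Type*} [MeasurableSpace X]
    [TopologicalSpace X] [T2Space X] [OpensMeasurableSpace X] [NormedAddCommGroup F]
    {μ : Measure X} [IsFiniteMeasure μ] {K : Set X} (hK : IsCompact K) (hμK : μ Kᶜ = 0)
    {f : X → F} (hf : Continuous f) : Integrable f μ := by
  rw [← Measure.restrict_eq_self_of_ae_mem (mem_ae_iff.2 hμK)]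
  exact hf.continuousOn.integrableOn_compact hK

theorem le_sInf_rpow_one_div {p : ℝ} (hp : 0 < p) {a : ℝ} (ha : 0 ≤ a) {D : Set ℝ}
    (hD : D.Nonempty) (h : ∀ c ∈ D, 0 ≤ c ∧ a ≤ c ^ (1 / p)) : a ≤ sInf D ^ (1 / p) := by
  simp_rw [one_div] at h ⊢
  rw [Real.le_rpow_inv_iff_of_pos ha (Real.sInf_nonneg fun c hc => (h c hc).1) hp]
  exact le_csInf hD fun c hc => (Real.le_rpow_inv_iff_of_pos ha (h c hc).1 hp).1 (h c hc).2

section Quantization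

variable {X : Type*} [MeasurableSpace X]

theorem SuppLE.mono {M N : ℕ} {ν : Measure X} (h : SuppLE M ν) (hMN : M ≤ N) : SuppLE N ν :=
  let ⟨s, hs, hν⟩ := h
  ⟨s, hs.trans hMN, hν⟩

theorem isCoupling_map_graph {f : X → X} (hf : Measurable f) (μ : Measure X) :
    IsCoupling (μ.map fun x => (x, f x)) μ (μ.map f) := by
  have hg : Measurable fun x => (x, f x) := measurable_id.prodMk hf
  constructor
  · rw [Measure.map_map measurable_fst hg]
    exact Measure.map_id
  · rw [Measure.map_map measurable_snd hg]
    rfl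

variable [NormedAddCommGroup X]

theorem exists_isNearestProj [OpensMeasurableSpace X] {Γ : Finset X} (hΓ : Γ.Nonempty) :
    ∃ f : X → X, IsNearestProj Γ f := by
  obtain ⟨a, ha⟩ := hΓ
  set e : ℕ → X := fun k => Γ.toList.getD k a
  have he : ∀ k, e k ∈ Γ := fun k => by
    simp only [e, List.getD_eq_getElem?_getD]
    cases h : Γ.toList[k]? with
    | none => exact ha
    | some y => exact Finset.mem_toList.1 (List.mem_of_getElem? h)
  let f := SimpleFunc.nearestPt e Γ.card
  refine ⟨f, f.measurable, fun x => ⟨he _, ?_⟩⟩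
  obtain ⟨y, hy, hxy⟩ := Γ.finite_toSet.isCompact.exists_infDist_eq_dist ⟨a, ha⟩ x
  obtain ⟨k, hk, rfl⟩ := List.getElem_of_mem (Finset.mem_toList.2 hy)
  have hfk : edist (f x) x ≤ edist (e k) x :=
    SimpleFunc.edist_nearestPt_le e x (by simpa using hk.le)
  refine le_antisymm ?_ ((Metric.infDist_le_dist_of_mem (he _)).trans_eq (dist_eq_norm _ _))
  rw [← dist_eq_norm, hxy, dist_comm, dist_comm x]
  simpa [e, edist_dist, List.getElem?_eq_getElem hk] using hfk

theorem IsNearestProj.map_compl_eq_zero [OpensMeasurableSpace X] {Γ : Finset X} {f : X → X}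
    (hf : IsNearestProj Γ f) (μ : Measure X) : μ.map f (Γ : Set X)ᶜ = 0 := by
  rw [Measure.map_apply hf.1 Γ.finite_toSet.isClosed.measurableSet.compl]
  convert measure_empty (μ := μ)
  exact eq_empty_of_forall_notMem fun x hx => hx (hf.2 x).1

theorem pCost_nonneg (p : ℝ) (π : Measure (X × X)) : 0 ≤ pCost p π :=
  integral_nonneg fun _ => Real.rpow_nonneg (norm_nonneg _) p

theorem quantErrPow_nonneg (p : ℝ) (Γ : Finset X) (μ : Measure X) : 0 ≤ quantErrPow p Γ μ :=
  integral_nonneg fun _ => Real.rpow_nonneg Metric.infDist_nonneg p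

theorem WpPow_nonneg (p : ℝ) (μ ν : Measure X) : 0 ≤ WpPow p μ ν :=
  Real.sInf_nonneg <| by rintro c ⟨π, -, -, rfl⟩; exact pCost_nonneg p π

theorem Wp_nonneg (p : ℝ) (μ ν : Measure X) : 0 ≤ Wp p μ ν :=
  Real.rpow_nonneg (WpPow_nonneg p μ ν) _

theorem WpPow_le_pCost {p : ℝ} {μ ν : Measure X} {π : Measure (X × X)}
    (hπ : IsProbabilityMeasure π) (hc : IsCoupling π μ ν) : WpPow p μ ν ≤ pCost p π :=
  csInf_le ⟨0, by rintro c ⟨π, -, -, rfl⟩; exact pCost_nonneg p π⟩ ⟨π, hπ, hc, rfl⟩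

theorem Wp_le_pCost_rpow {p : ℝ} (hp : 0 ≤ p) {μ ν : Measure X} {π : Measure (X × X)}
    (hπ : IsProbabilityMeasure π) (hc : IsCoupling π μ ν) : Wp p μ ν ≤ pCost p π ^ (1 / p) :=
  Real.rpow_le_rpow (WpPow_nonneg p μ ν) (WpPow_le_pCost hπ hc) (by positivity)

variable [BorelSpace X] [SecondCountableTopology X]

theorem WpPow_map_le_quantErrPow {p : ℝ} {Γ : Finset X} {f : X → X} (hf : IsNearestProj Γ f)
    (μ : Measure X) [IsProbabilityMeasure μ] : WpPow p μ (μ.map f) ≤ quantErrPow p Γ μ := by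
  have hg : Measurable fun x => (x, f x) := measurable_id.prodMk hf.1
  have hcost : pCost p (μ.map fun x => (x, f x)) = quantErrPow p Γ μ := by
    have hc : Measurable fun q : X × X => ‖q.2 - q.1‖ ^ p := by fun_prop
    rw [pCost, integral_map hg.aemeasurable hc.aestronglyMeasurable, quantErrPow]
    simp_rw [norm_sub_rev, (hf.2 _).2]
  exact hcost ▸ WpPow_le_pCost (Measure.isProbabilityMeasure_map hg.aemeasurable)
    (isCoupling_map_graph hf.1 μ)

theorem quantErrPow_le_pCost {p : ℝ} (hp : 0 ≤ p) {μ ν : Measure X} {K : Set X}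
    (hK : IsCompact K) (hμK : μ Kᶜ = 0) {s : Finset X} (hν : ν (s : Set X)ᶜ = 0)
    {π : Measure (X × X)} [IsProbabilityMeasure π] (hc : IsCoupling π μ ν) :
    quantErrPow p s μ ≤ pCost p π := by
  obtain ⟨hfst, hsnd⟩ := hc
  have hsupp : π (K ×ˢ (s : Set X))ᶜ = 0 := by
    rw [compl_prod_eq_union, prod_univ, univ_prod]
    refine measure_union_null ?_ ?_
    · rwa [← Measure.map_apply measurable_fst hK.isClosed.measurableSet.compl, hfst]
    · rwa [← Measure.map_apply measurable_snd s.finite_toSet.measurableSet.compl, hsnd]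
  have hcompact : IsCompact (K ×ˢ (s : Set X)) := hK.prod s.finite_toSet.isCompact
  have hle : ∀ᵐ q ∂π, Metric.infDist q.1 (s : Set X) ^ p ≤ ‖q.2 - q.1‖ ^ p := by
    filter_upwards [mem_ae_iff.2 hsupp] with q hq
    rw [← dist_eq_norm, dist_comm]
    exact Real.rpow_le_rpow Metric.infDist_nonneg (Metric.infDist_le_dist_of_mem hq.2) hp
  calc quantErrPow p s μ = ∫ q, Metric.infDist q.1 (s : Set X) ^ p ∂π := by
        rw [quantErrPow, ← hfst, integral_map measurable_fst.aemeasurable (by fun_prop)]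
    _ ≤ pCost p π := integral_mono_ae
        ((by fun_prop : Continuous _).integrable_of_measure_compl_eq_zero hcompact hsupp)
        ((by fun_prop : Continuous _).integrable_of_measure_compl_eq_zero hcompact hsupp) hle

theorem quantErrPow_le_WpPow {p : ℝ} (hp : 0 ≤ p) {μ ν : Measure X} [IsProbabilityMeasure μ]
    [IsProbabilityMeasure ν] {K : Set X} (hK : IsCompact K) (hμK : μ Kᶜ = 0) {s : Finset X}
    (hν : ν (s : Set X)ᶜ = 0) : quantErrPow p s μ ≤ WpPow p μ ν := by
  refine le_csInf ⟨_, μ.prod ν, inferInstance, ⟨by simp, by simp⟩, rfl⟩ ?_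
  rintro c ⟨π, hπ, hc, rfl⟩
  exact quantErrPow_le_pCost hp hK hμK hν hc

theorem sInf_quantErr_eq_sInf_Wp (N : ℕ) {p : ℝ} (hp : 0 ≤ p) (μ : Measure X)
    [IsProbabilityMeasure μ] {K : Set X} (hK : IsCompact K) (hμK : μ Kᶜ = 0) :
    sInf {c | ∃ Γ : Finset X, Γ.Nonempty ∧ Γ.card ≤ N ∧ c = quantErrPow p Γ μ ^ (1 / p)}
      = sInf {c | ∃ ν : Measure X, IsProbabilityMeasure ν ∧ SuppLE N ν ∧ c = Wp p μ ν} := by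
  have hp' : 0 ≤ 1 / p := by positivity
  refine csInf_eq_csInf_of_forall_exists_le ?_ ?_
  · rintro _ ⟨Γ, hΓ, hcard, rfl⟩
    obtain ⟨f, hf⟩ := exists_isNearestProj hΓ
    have := Measure.isProbabilityMeasure_map (μ := μ) hf.1.aemeasurable
    exact ⟨_, ⟨μ.map f, this, ⟨Γ, hcard, hf.map_compl_eq_zero μ⟩, rfl⟩,
      Real.rpow_le_rpow (WpPow_nonneg _ _ _) (WpPow_map_le_quantErrPow hf μ) hp'⟩
  · rintro _ ⟨ν, hν, ⟨s, hcard, hs⟩, rfl⟩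
    have hne : s.Nonempty := by
      by_contra h
      simp [Finset.not_nonempty_iff_eq_empty.1 h] at hs
    exact ⟨_, ⟨s, hne, hcard, rfl⟩,
      Real.rpow_le_rpow (quantErrPow_nonneg _ _ _) (quantErrPow_le_WpPow hp hK hμK hs) hp'⟩

end Quantization

section Barycentric

variable {V : Type*} [NormedAddCommGroup V] [NormedSpace ℝ V]

theorem exists_affineBasis_subset_convexHull [FiniteDimensional ℝ V] {K : Set V}
    (hK : Bornology.IsBounded K) :
    ∃ b : AffineBasis (Fin (Module.finrank ℝ V + 1)) ℝ V, K ⊆ convexHull ℝ (range b) := by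
  obtain ⟨b, hb, -⟩ := exists_mem_interior_convexHull_affineBasis (x := (0 : V)) Filter.univ_mem
  obtain ⟨δ, hδ, hball⟩ := Metric.mem_nhds_iff.1 (mem_interior_iff_mem_nhds.1 hb)
  obtain ⟨r, hr, hKr⟩ := hK.subset_ball_lt 0 0
  have ht : 0 < r / δ := div_pos hr hδ
  refine ⟨Units.mk0 (r / δ) ht.ne' • b, fun x hx => ?_⟩
  have hy : (r / δ)⁻¹ • x ∈ Metric.ball (0 : V) δ := by
    have := hKr hx
    rw [mem_ball_zero_iff] at this ⊢
    rw [norm_smul, Real.norm_of_nonneg (inv_nonneg.2 ht.le)]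
    calc (r / δ)⁻¹ * ‖x‖ < (r / δ)⁻¹ * r := by gcongr
      _ = δ := by field_simp
  have := smul_mem_smul_set (a := r / δ) (hball hy)
  rwa [smul_inv_smul₀ ht.ne', ← convexHull_smul, ← range_smul] at this

theorem AffineBasis.sum_coord_smul_sub_eq_zero {ι : Type*} [Fintype ι] (b : AffineBasis ι ℝ V)
    (x : V) : ∑ i, b.coord i x • (b i - x) = 0 := by
  simp_rw [smul_sub, Finset.sum_sub_distrib, ← Finset.sum_smul, b.sum_coord_apply_eq_one,
    b.linear_combination_coord_eq_self, one_smul, sub_self]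

variable [MeasurableSpace V] {ι : Type*} (b : AffineBasis ι ℝ V) {μ : Measure V}

def baryCoupling (μ : Measure V) (b : AffineBasis ι ℝ V) : Measure (V × V) :=
  Measure.sum fun i => (μ.withDensity fun x => ENNReal.ofReal (b.coord i x)).map fun x => (x, b i)

theorem restrict_prod_univ_baryCoupling [Countable ι] {A : Set V} (hA : MeasurableSet A) :
    (baryCoupling μ b).restrict (A ×ˢ univ) = baryCoupling (μ.restrict A) b := by
  rw [baryCoupling, baryCoupling, Measure.restrict_sum_of_countable]
  congr 1
  funext i
  rw [Measure.restrict_map measurable_prodMk_right (hA.prod .univ),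
    mk_preimage_prod_left (mem_univ _), restrict_withDensity hA]

variable [BorelSpace V] [FiniteDimensional ℝ V]

theorem AffineBasis.measurable_coord (i : ι) : Measurable (b.coord i) :=
  (continuous_barycentric_coord b i).measurable

variable [Fintype ι]

theorem map_fst_baryCoupling (hμ : ∀ᵐ x ∂μ, x ∈ convexHull ℝ (range b)) :
    (baryCoupling μ b).map Prod.fst = μ := by
  rw [baryCoupling, Measure.map_sum measurable_fst.aemeasurable]
  simp_rw [Measure.map_map measurable_fst measurable_prodMk_right, Function.comp_def,
    Measure.map_id']
  rw [← withDensity_tsum fun i => (b.measurable_coord i).ennreal_ofReal]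
  conv_rhs => rw [← withDensity_one (μ := μ)]
  refine withDensity_congr_ae ?_
  filter_upwards [hμ] with x hx
  rw [b.convexHull_eq_nonneg_coord] at hx
  rw [ENNReal.tsum_apply, tsum_fintype, ← ENNReal.ofReal_sum_of_nonneg fun i _ => hx i,
    b.sum_coord_apply_eq_one, ENNReal.ofReal_one, Pi.one_apply]

theorem baryCoupling_univ (hμ : ∀ᵐ x ∂μ, x ∈ convexHull ℝ (range b)) :
    baryCoupling μ b univ = μ univ := by
  conv_rhs => rw [← map_fst_baryCoupling b hμ]
  rw [Measure.map_apply measurable_fst .univ, preimage_univ]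

theorem baryCoupling_compl_prod_range {K : Set V} (hK : IsCompact K) (hμK : μ Kᶜ = 0) :
    baryCoupling μ b (K ×ˢ range b)ᶜ = 0 := by
  have hS : MeasurableSet (K ×ˢ range b)ᶜ :=
    (hK.prod (finite_range b).isCompact).isClosed.measurableSet.compl
  rw [baryCoupling, Measure.sum_apply _ hS, ENNReal.tsum_eq_zero]
  intro i
  rw [Measure.map_apply measurable_prodMk_right hS]
  refine withDensity_absolutelyContinuous _ _ (measure_mono_null (fun x hx => ?_) hμK)
  simp_all

theorem Continuous.integrable_baryCoupling [IsFiniteMeasure μ] {K : Set V} (hK : IsCompact K)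
    (hKb : K ⊆ convexHull ℝ (range b)) (hμK : μ Kᶜ = 0) {G : Type*} [NormedAddCommGroup G]
    {F : V × V → G} (hF : Continuous F) : Integrable F (baryCoupling μ b) := by
  have : IsFiniteMeasure (baryCoupling μ b) :=
    ⟨by rw [baryCoupling_univ b (Filter.mem_of_superset (mem_ae_iff.2 hμK) hKb)];
        exact measure_lt_top _ _⟩
  exact hF.integrable_of_measure_compl_eq_zero (hK.prod (finite_range b).isCompact)
    (baryCoupling_compl_prod_range b hK hμK)

theorem integral_baryCoupling (hμ : ∀ᵐ x ∂μ, x ∈ convexHull ℝ (range b)) {G : Type*}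
    [NormedAddCommGroup G] [NormedSpace ℝ G] {F : V × V → G}
    (hF : Integrable F (baryCoupling μ b)) :
    ∫ q, F q ∂baryCoupling μ b = ∑ i, ∫ x, b.coord i x • F (x, b i) ∂μ := by
  rw [baryCoupling, integral_sum_measure hF, tsum_fintype]
  refine Finset.sum_congr rfl fun i _ => ?_
  rw [integral_map measurable_prodMk_right.aemeasurable
      (hF.mono_measure (Measure.le_sum _ i)).aestronglyMeasurable,
    integral_withDensity_eq_integral_toReal_smul (b.measurable_coord i).ennreal_ofReal
      (.of_forall fun _ => ENNReal.ofReal_lt_top)]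
  refine integral_congr_ae ?_
  filter_upwards [hμ] with x hx
  rw [b.convexHull_eq_nonneg_coord] at hx
  rw [ENNReal.toReal_ofReal (hx i)]

theorem isMartingaleCoupling_baryCoupling [IsProbabilityMeasure μ] {K : Set V} (hK : IsCompact K)
    (hKb : K ⊆ convexHull ℝ (range b)) (hμK : μ Kᶜ = 0) :
    IsMartingaleCoupling (baryCoupling μ b) μ ((baryCoupling μ b).map Prod.snd) := by
  have hμ : ∀ᵐ x ∂μ, x ∈ convexHull ℝ (range b) := Filter.mem_of_superset (mem_ae_iff.2 hμK) hKb
  refine ⟨⟨by rw [baryCoupling_univ b hμ, measure_univ]⟩, ⟨map_fst_baryCoupling b hμ, rfl⟩,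
    fun A hA => ?_⟩
  have hμA : μ.restrict A Kᶜ = 0 := nonpos_iff_eq_zero.1 ((μ.restrict_apply_le A _).trans_eq hμK)
  have hint (i : ι) : Integrable (fun x => b.coord i x • (b i - x)) (μ.restrict A) :=
    ((continuous_barycentric_coord b i).smul (continuous_const.sub continuous_id)
      ).integrable_of_measure_compl_eq_zero hK hμA
  rw [restrict_prod_univ_baryCoupling b hA, integral_baryCoupling b (ae_restrict_of_ae hμ)
      ((by fun_prop : Continuous fun q : V × V => q.2 - q.1).integrable_baryCoupling b hK hKb hμA),
    ← integral_finsetSum _ fun i _ => hint i]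
  simp_rw [b.sum_coord_smul_sub_eq_zero, integral_zero]

theorem convexOrder_map_snd_baryCoupling [IsFiniteMeasure μ] {K : Set V} (hK : IsCompact K)
    (hKb : K ⊆ convexHull ℝ (range b)) (hμK : μ Kᶜ = 0) :
    ConvexOrder μ ((baryCoupling μ b).map Prod.snd) := by
  intro φ hφ hφμ hφν
  have hμ : ∀ᵐ x ∂μ, x ∈ convexHull ℝ (range b) := Filter.mem_of_superset (mem_ae_iff.2 hμK) hKb
  have hint (i : ι) : Integrable (fun x => b.coord i x • φ (b i)) μ :=
    ((continuous_barycentric_coord b i).integrable_of_measure_compl_eq_zero hK hμK).smul_const _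
  have hφπ : Integrable (fun q : V × V => φ q.2) (baryCoupling μ b) :=
    (integrable_map_measure hφν.aestronglyMeasurable measurable_snd.aemeasurable).1 hφν
  rw [integral_map measurable_snd.aemeasurable hφν.aestronglyMeasurable,
    integral_baryCoupling b hμ hφπ,
    ← integral_finsetSum _ fun i _ => hint i]
  refine integral_mono_ae hφμ (integrable_finsetSum _ fun i _ => hint i) ?_
  filter_upwards [hμ] with x hx
  rw [b.convexHull_eq_nonneg_coord] at hx
  have := hφ.map_sum_le (t := Finset.univ) (fun i _ => hx i) (b.sum_coord_apply_eq_one x)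
    (fun i _ => mem_univ (b i))
  rwa [b.linear_combination_coord_eq_self] at this

theorem suppLE_map_snd_baryCoupling {K : Set V} (hK : IsCompact K) (hμK : μ Kᶜ = 0) :
    SuppLE (Fintype.card ι) ((baryCoupling μ b).map Prod.snd) := by
  classical
  refine ⟨Finset.univ.image b, Finset.card_image_le.trans_eq Finset.card_univ, ?_⟩
  rw [Measure.map_apply measurable_snd (Finset.finite_toSet _).isClosed.measurableSet.compl]
  refine measure_mono_null ?_ (baryCoupling_compl_prod_range b hK hμK)
  rintro q hq ⟨-, i, hi⟩
  exact hq (by simp [← hi])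

theorem exists_convexOrder_isMartingaleCoupling (μ : Measure V) [IsProbabilityMeasure μ]
    {K : Set V} (hK : IsCompact K) (hμK : μ Kᶜ = 0) :
    ∃ ν : Measure V, IsProbabilityMeasure ν ∧ SuppLE (Module.finrank ℝ V + 1) ν ∧
      ConvexOrder μ ν ∧ ∃ π : Measure (V × V), IsMartingaleCoupling π μ ν := by
  obtain ⟨b, hKb⟩ := exists_affineBasis_subset_convexHull hK.isBounded
  have hπ := isMartingaleCoupling_baryCoupling b hK hKb hμK
  have := hπ.1
  refine ⟨_, Measure.isProbabilityMeasure_map measurable_snd.aemeasurable, ?_,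
    convexOrder_map_snd_baryCoupling b hK hKb hμK, _, hπ⟩
  simpa using suppLE_map_snd_baryCoupling b hK hμK

end Barycentric

theorem stmt12 (d N : ℕ) (hN : d + 1 ≤ N) (p : ℝ) (hp : 1 ≤ p)
    (μ : Measure (Ed d)) [IsProbabilityMeasure μ]
    (hcomp : ∃ K : Set (Ed d), IsCompact K ∧ μ Kᶜ = 0) :
    sInf {c | ∃ Γ : Finset (Ed d), Γ.Nonempty ∧ Γ.card ≤ N ∧
        c = quantErrPow p Γ μ ^ (1 / p)}
      = sInf {c | ∃ ν : Measure (Ed d), IsProbabilityMeasure ν ∧ SuppLE N ν ∧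
          c = Wp p μ ν} ∧
    sInf {c | ∃ ν : Measure (Ed d), IsProbabilityMeasure ν ∧ SuppLE N ν ∧ c = Wp p μ ν}
      ≤ sInf {c | ∃ ν : Measure (Ed d), IsProbabilityMeasure ν ∧ SuppLE N ν ∧
          ConvexOrder μ ν ∧ c = Wp p μ ν} ∧
    sInf {c | ∃ ν : Measure (Ed d), IsProbabilityMeasure ν ∧ SuppLE N ν ∧
        ConvexOrder μ ν ∧ c = Wp p μ ν}
      ≤ (sInf {c | ∃ ν : Measure (Ed d), IsProbabilityMeasure ν ∧ SuppLE N ν ∧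
          ConvexOrder μ ν ∧
          ∃ π : Measure (Ed d × Ed d), IsMartingaleCoupling π μ ν ∧ c = pCost p π}) ^ (1 / p) := by
  obtain ⟨K, hK, hμK⟩ := hcomp
  have hp0 : 0 < p := zero_lt_one.trans_le hp
  obtain ⟨ν₀, hν₀, hsupp₀, hcvx₀, π₀, hπ₀⟩ := exists_convexOrder_isMartingaleCoupling μ hK hμK
  replace hsupp₀ : SuppLE N ν₀ := hsupp₀.mono (by simpa using hN)
  have hWp : BddBelow {c | ∃ ν : Measure (Ed d), IsProbabilityMeasure ν ∧ SuppLE N ν ∧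
      ConvexOrder μ ν ∧ c = Wp p μ ν} := ⟨0, by rintro _ ⟨ν, -, -, -, rfl⟩; exact Wp_nonneg p μ ν⟩
  refine ⟨sInf_quantErr_eq_sInf_Wp N hp0.le μ hK hμK, ?_, ?_⟩
  · refine csInf_le_csInf ⟨0, ?_⟩ ⟨_, ν₀, hν₀, hsupp₀, hcvx₀, rfl⟩ ?_
    · rintro _ ⟨ν, -, -, rfl⟩
      exact Wp_nonneg p μ ν
    · rintro _ ⟨ν, hν, hsupp, -, rfl⟩
      exact ⟨ν, hν, hsupp, rfl⟩
  · refine le_sInf_rpow_one_div hp0 (Real.sInf_nonneg ?_)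
      ⟨_, ν₀, hν₀, hsupp₀, hcvx₀, π₀, hπ₀, rfl⟩ ?_
    · rintro _ ⟨ν, -, -, -, rfl⟩
      exact Wp_nonneg p μ ν
    · rintro _ ⟨ν, hν, hsupp, hcvx, π, hπ, rfl⟩
      exact ⟨pCost_nonneg p π, (csInf_le hWp ⟨ν, hν, hsupp, hcvx, rfl⟩).trans
        (Wp_le_pCost_rpow hp0.le hπ.1 hπ.2.1)⟩

end
end

section
/- Let μ ≤_cvx ν be probability measures on ℝ^d with ν compactly supported and μ with finite second moment. Let Γ be a quadratic optimal primal N-quantizer of μ and Γ' a dual K-quantization grid for ν with splitting operator. For any martingale coupling π ∈ M(μ,ν), the measure π̄ obtained as the joint law of (Proj_Γ(X), Proj^{del}_{Γ'}(Y,U)) with (X,Y) ∼ π and U ∼ U([0,1]) independent, is a martingale coupling between the primal quantization μ̂^N of μ and the dual quantization ν̌^K of ν. -/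
open MeasureTheory Set

noncomputable section

variable {E : Type*} [NormedAddCommGroup E] [NormedSpace ℝ E] [MeasurableSpace E] [BorelSpace E]

/-!
Under `π ⊗ U` the increment `g(Y,U) - f(X)` splits as
`(g(Y,U) - Y) + (Y - X) + (X - f(X))`, and each summand has mean zero on every event
`{f(X) ∈ A}`: the first because `∫ g(y,u) du = y` on the support of `ν`, the second because `π`
is a martingale coupling and `{f(X) ∈ A}` is an event of `X`, the third because an
`L²`-optimal quantizer is self-consistent. For the latter, moving a grid point `a` by
`v = ∫_C (x - a) dμ`, where `C` is the Voronoi cell of `a`, changes the error on `C` by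
`(μ(C) - 2)‖v‖²`, which optimality forces to be nonnegative, so `v = 0`.
-/

/-- `E[X | f X] = f X` for `X ∼ μ` (the stationarity of the quantizer). -/
def IsSelfConsistent {V : Type*} [NormedAddCommGroup V] [NormedSpace ℝ V] [MeasurableSpace V]
    (f : V → V) (μ : Measure V) : Prop :=
  ∀ A : Set V, MeasurableSet A → ∫ x in f ⁻¹' A, (x - f x) ∂μ = 0

section Coupling

variable {X U : Type*} [MeasurableSpace X] [MeasurableSpace U] {η : Measure U}
  [IsProbabilityMeasure η]

lemma IsCoupling.map_prod {π : Measure (X × X)} [IsFiniteMeasure π] {μ ν : Measure X}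
    (hπ : IsCoupling π μ ν) {f : X → X} (hf : Measurable f) {g : X → U → X}
    (hg : Measurable fun q : X × U => g q.1 q.2) :
    IsCoupling ((π.prod η).map fun q => (f q.1.1, g q.1.2 q.2)) (μ.map f)
      ((ν.prod η).map fun q => g q.1 q.2) := by
  have hm : Measurable fun q : (X × X) × U => (f q.1.1, g q.1.2 q.2) := by fun_prop
  constructor
  · calc ((π.prod η).map fun q => (f q.1.1, g q.1.2 q.2)).map Prod.fst
        = (((π.prod η).map Prod.fst).map Prod.fst).map f := by
          rw [Measure.map_map measurable_fst hm, Measure.map_map measurable_fst measurable_fst,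
            Measure.map_map hf (measurable_fst.comp measurable_fst)]
          rfl
      _ = μ.map f := by rw [Measure.map_fst_prod, measure_univ, one_smul, hπ.1]
  · calc ((π.prod η).map fun q => (f q.1.1, g q.1.2 q.2)).map Prod.snd
        = ((π.prod η).map (Prod.map Prod.snd id)).map fun q => g q.1 q.2 := by
          rw [Measure.map_map measurable_snd hm,
            Measure.map_map hg (measurable_snd.prodMap measurable_id)]
          rfl
      _ = (ν.prod η).map fun q => g q.1 q.2 := by
          rw [← Measure.map_prod_map _ _ measurable_snd measurable_id, Measure.map_id, hπ.2]

end Coupling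

section Martingale

variable {V U : Type*} [NormedAddCommGroup V] [NormedSpace ℝ V] [CompleteSpace V]
  [MeasurableSpace V] [BorelSpace V] [SecondCountableTopology V] [MeasurableSpace U]
  {η : Measure U} [IsProbabilityMeasure η]

lemma setIntegral_prod_sub_of_integral_eq {π : Measure (V × V)} [IsFiniteMeasure π]
    {f : V → V} (hf : Integrable (fun p : V × V => f p.1) π) {g : V → U → V}
    (hg : Measurable fun q : V × U => g q.1 q.2) {C : ℝ} (hgC : ∀ y u, ‖g y u‖ ≤ C)
    (hmean : ∀ᵐ p ∂π, ∫ u, g p.2 u ∂η = p.2) (B : Set (V × V)) :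
    ∫ q in B ×ˢ univ, (g q.1.2 q.2 - f q.1.1) ∂(π.prod η) = ∫ p in B, (p.2 - f p.1) ∂π := by
  have hgi : Integrable (fun q : (V × V) × U => g q.1.2 q.2) (π.prod η) :=
    Integrable.of_bound
      (hg.comp ((measurable_snd.comp measurable_fst).prodMk measurable_snd)).aestronglyMeasurable C
      (ae_of_all _ fun q => hgC _ _)
  rw [setIntegral_prod (fun q : (V × V) × U => g q.1.2 q.2 - f q.1.1)
    (hgi.sub (hf.comp_fst η)).integrableOn, Measure.restrict_univ]
  refine integral_congr_ae (ae_restrict_of_ae ?_)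
  filter_upwards [hmean] with p hp
  rw [integral_sub (Integrable.of_bound (f := g p.2)
    (hg.comp (measurable_const.prodMk measurable_id)).aestronglyMeasurable C
    (ae_of_all _ (hgC p.2))) (integrable_const _), hp, integral_const, probReal_univ, one_smul]

theorem IsMartingaleCoupling.map_of_isSelfConsistent {π : Measure (V × V)} {μ ν : Measure V}
    (hπ : IsMartingaleCoupling π μ ν) (hμ : Integrable (fun x => x) μ) {f : V → V}
    (hfm : Measurable f) (hfi : Integrable f μ) (hf : IsSelfConsistent f μ) {g : V → U → V}
    (hgm : Measurable fun q : V × U => g q.1 q.2) {C : ℝ} (hgC : ∀ y u, ‖g y u‖ ≤ C)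
    (hmean : ∀ᵐ y ∂ν, ∫ u, g y u ∂η = y) :
    IsMartingaleCoupling ((π.prod η).map fun q => (f q.1.1, g q.1.2 q.2)) (μ.map f)
      ((ν.prod η).map fun q => g q.1 q.2) := by
  obtain ⟨hπp, hπc, hπmart⟩ := hπ
  have hm : Measurable fun q : (V × V) × U => (f q.1.1, g q.1.2 q.2) := by fun_prop
  refine ⟨Measure.isProbabilityMeasure_map hm.aemeasurable, hπc.map_prod hfm hgm, fun A hA => ?_⟩
  have hmeanπ : ∀ᵐ p ∂π, ∫ u, g p.2 u ∂η = p.2 :=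
    ae_of_ae_map measurable_snd.aemeasurable (hπc.2 ▸ hmean)
  have hfst : Integrable (fun p : V × V => p.1) π :=
    (hπc.1 ▸ hμ).comp_measurable measurable_fst
  have hsnd : Integrable (fun p : V × V => p.2) π := by
    refine Integrable.of_bound measurable_snd.aestronglyMeasurable C ?_
    filter_upwards [hmeanπ] with p hp
    have hbound := norm_integral_le_of_norm_le_const (ae_of_all η (hgC p.2))
    rwa [hp, probReal_univ, mul_one] at hbound
  have hfπ : Integrable (fun p : V × V => f p.1) π :=
    (hπc.1 ▸ hfi).comp_measurable measurable_fst
  have hpre : (fun q : (V × V) × U => (f q.1.1, g q.1.2 q.2)) ⁻¹' (A ×ˢ univ)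
      = ((f ⁻¹' A) ×ˢ (univ : Set V)) ×ˢ (univ : Set U) := by
    simp only [prod_univ]
    rfl
  have hstat : ∫ p in (f ⁻¹' A) ×ˢ univ, (p.1 - f p.1) ∂π = 0 := by
    rw [prod_univ, ← setIntegral_map (f := fun x => x - f x) (hfm hA) (by fun_prop)
      measurable_fst.aemeasurable, hπc.1]
    exact hf A hA
  calc ∫ q in A ×ˢ (univ : Set V), (q.2 - q.1)
          ∂((π.prod η).map fun q => (f q.1.1, g q.1.2 q.2))
      = ∫ p in (f ⁻¹' A) ×ˢ univ, (p.2 - f p.1) ∂π := by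
        rw [setIntegral_map (hA.prod .univ) (by fun_prop) hm.aemeasurable, hpre,
          setIntegral_prod_sub_of_integral_eq hfπ hgm hgC hmeanπ]
    _ = ∫ p in (f ⁻¹' A) ×ˢ univ, (p.2 - p.1) ∂π
          + ∫ p in (f ⁻¹' A) ×ˢ univ, (p.1 - f p.1) ∂π := by
        rw [← integral_add (f := fun p : V × V => p.2 - p.1) (g := fun p : V × V => p.1 - f p.1)
          (hsnd.sub hfst).integrableOn (hfst.sub hfπ).integrableOn]
        simp only [sub_add_sub_cancel]
    _ = 0 := by rw [hπmart _ (hfm hA), hstat, add_zero]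

end Martingale

section Quantization

variable {V : Type*} [NormedAddCommGroup V]

lemma norm_le_sum_norm_of_mem {s : Finset V} {x : V} (hx : x ∈ s) : ‖x‖ ≤ ∑ c ∈ s, ‖c‖ :=
  Finset.single_le_sum (f := (‖·‖)) (fun c _ => norm_nonneg c) hx

variable [MeasurableSpace V] {μ : Measure V}

lemma IsNearestProj.quantErrPow_two_eq {Γ : Finset V} {f : V → V} (hf : IsNearestProj Γ f)
    (μ : Measure V) : quantErrPow 2 Γ μ = ∫ x, ‖x - f x‖ ^ 2 ∂μ := by
  simp only [quantErrPow, Real.rpow_two, (hf.2 _).2]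

lemma quantErrPow_two_le_integral {Γ : Finset V} {h : V → V} (hΓ : ∀ x, h x ∈ Γ)
    (hi : Integrable (fun x => ‖x - h x‖ ^ 2) μ) :
    quantErrPow 2 Γ μ ≤ ∫ x, ‖x - h x‖ ^ 2 ∂μ := by
  simp only [quantErrPow, Real.rpow_two]
  refine integral_mono_of_nonneg (ae_of_all _ fun x => by positivity) hi (ae_of_all _ fun x => ?_)
  show Metric.infDist x Γ ^ 2 ≤ ‖x - h x‖ ^ 2
  rw [← dist_eq_norm]
  exact pow_le_pow_left₀ Metric.infDist_nonneg
    (Metric.infDist_le_dist_of_mem (by simpa using hΓ x)) 2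

variable [BorelSpace V] [SecondCountableTopology V]

lemma memLp_of_forall_mem_finset {α : Type*} [MeasurableSpace α] {ρ : Measure α}
    [IsFiniteMeasure ρ] {h : α → V} (hh : Measurable h) {s : Finset V} (hs : ∀ x, h x ∈ s)
    (p : ENNReal) : MemLp h p ρ :=
  .of_bound hh.aestronglyMeasurable _ (ae_of_all _ fun x => norm_le_sum_norm_of_mem (hs x))

lemma memLp_id_two_of_integrable_norm_rpow (h : Integrable (fun x => ‖x‖ ^ (2 : ℝ)) μ) :
    MemLp (fun x => x) 2 μ :=
  (memLp_two_iff_integrable_sq_norm aestronglyMeasurable_id).2 (by simpa [Real.rpow_two] using h)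

lemma integrable_norm_sub_sq_of_forall_mem [IsFiniteMeasure μ] (hμ : MemLp (fun x => x) 2 μ)
    {h : V → V} (hh : Measurable h) {s : Finset V} (hs : ∀ x, h x ∈ s) :
    Integrable (fun x => ‖x - h x‖ ^ 2) μ :=
  (memLp_two_iff_integrable_sq_norm (hμ.sub (memLp_of_forall_mem_finset hh hs 2)).1).1
    (hμ.sub (memLp_of_forall_mem_finset hh hs 2))

variable [IsFiniteMeasure μ] {N : ℕ} {Γ : Finset V} {f : V → V}

lemma IsNearestProj.integrable (hf : IsNearestProj Γ f) : Integrable f μ :=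
  (memLp_of_forall_mem_finset hf.1 (fun x => (hf.2 x).1) 1).integrable le_rfl

lemma IsOptimalQuantizer.integral_le_of_forall_mem (hμ : MemLp (fun x => x) 2 μ)
    (hΓ : IsOptimalQuantizer 2 N Γ μ) (hf : IsNearestProj Γ f) {Γ' : Finset V}
    (hcard : Γ'.card ≤ N) {h : V → V} (hh : Measurable h) (hmem : ∀ x, h x ∈ Γ') :
    ∫ x, ‖x - f x‖ ^ 2 ∂μ ≤ ∫ x, ‖x - h x‖ ^ 2 ∂μ := by
  rw [← hf.quantErrPow_two_eq]
  exact (hΓ.2.2 Γ' ⟨h 0, hmem 0⟩ hcard).trans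
    (quantErrPow_two_le_integral hmem (integrable_norm_sub_sq_of_forall_mem hμ hh hmem))

lemma IsOptimalQuantizer.setIntegral_cell_le (hμ : MemLp (fun x => x) 2 μ)
    (hΓ : IsOptimalQuantizer 2 N Γ μ) (hf : IsNearestProj Γ f) {a : V} (ha : a ∈ Γ) (b : V) :
    ∫ x in f ⁻¹' {a}, ‖x - a‖ ^ 2 ∂μ ≤ ∫ x in f ⁻¹' {a}, ‖x - b‖ ^ 2 ∂μ := by
  classical
  set S := f ⁻¹' {a}
  have hS : MeasurableSet S := hf.1 (measurableSet_singleton a)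
  set h := S.piecewise (fun _ => b) f
  have hmem : ∀ x, h x ∈ insert b (Γ.erase a) := by
    intro x
    by_cases hx : x ∈ S
    · simp [h, hx]
    · simp only [h, piecewise_eq_of_notMem _ _ _ hx]
      exact Finset.mem_insert_of_mem (Finset.mem_erase.2 ⟨hx, (hf.2 x).1⟩)
  have hcard : (insert b (Γ.erase a)).card ≤ N := by
    have := Finset.card_insert_le b (Γ.erase a)
    have := Finset.card_erase_add_one ha
    have := hΓ.2.1
    omega
  have hhm : Measurable h := measurable_const.piecewise hS hf.1
  have hfi := integrable_norm_sub_sq_of_forall_mem hμ hf.1 fun x => (hf.2 x).1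
  have hhi := integrable_norm_sub_sq_of_forall_mem hμ hhm hmem
  have hle := hΓ.integral_le_of_forall_mem hμ hf hcard hhm hmem
  rw [← integral_add_compl hS hfi, ← integral_add_compl hS hhi] at hle
  have hSf : ∫ x in S, ‖x - f x‖ ^ 2 ∂μ = ∫ x in S, ‖x - a‖ ^ 2 ∂μ :=
    setIntegral_congr_fun hS fun x hx => by rw [show f x = a from hx]
  have hSh : ∫ x in S, ‖x - h x‖ ^ 2 ∂μ = ∫ x in S, ‖x - b‖ ^ 2 ∂μ :=
    setIntegral_congr_fun hS fun x hx => by simp [h, hx]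
  have hSc : ∫ x in Sᶜ, ‖x - h x‖ ^ 2 ∂μ = ∫ x in Sᶜ, ‖x - f x‖ ^ 2 ∂μ :=
    setIntegral_congr_fun hS.compl fun x hx => by simp only [h, piecewise_eq_of_notMem _ _ _ hx]
  linarith

end Quantization

section SelfConsistency

variable {H : Type*} [NormedAddCommGroup H] [InnerProductSpace ℝ H] [CompleteSpace H]
  [MeasurableSpace H] {μ : Measure H} [IsProbabilityMeasure μ]

theorem setIntegral_sub_eq_zero_of_forall_le (hμ : MemLp (fun x => x) 2 μ) {S : Set H} {a : H}
    (hmin : ∀ b, ∫ x in S, ‖x - a‖ ^ 2 ∂μ ≤ ∫ x in S, ‖x - b‖ ^ 2 ∂μ) :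
    ∫ x in S, (x - a) ∂μ = 0 := by
  set v := ∫ x in S, (x - a) ∂μ
  have hint : Integrable (fun x => x - a) μ := (hμ.integrable one_le_two).sub (integrable_const a)
  have hsq : Integrable (fun x => ‖x - a‖ ^ 2) μ :=
    (memLp_two_iff_integrable_sq_norm hint.1).1 (hμ.sub (memLp_const a))
  have hexpand : ∫ x in S, ‖x - (a + v)‖ ^ 2 ∂μ
      = ∫ x in S, ‖x - a‖ ^ 2 ∂μ - 2 * ‖v‖ ^ 2 + μ.real S * ‖v‖ ^ 2 := by
    have hinner : Integrable (fun x => 2 * inner ℝ v (x - a)) μ :=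
      (hint.const_inner v).const_mul 2
    simp_rw [sub_add_eq_sub_sub _ a v, norm_sub_sq_real _ v, real_inner_comm v]
    rw [integral_add (f := fun x => ‖x - a‖ ^ 2 - 2 * inner ℝ v (x - a))
        (hsq.sub hinner).restrict (integrable_const _).integrableOn,
      integral_sub hsq.integrableOn hinner.integrableOn, integral_const_mul,
      integral_inner hint.integrableOn, real_inner_self_eq_norm_sq, setIntegral_const,
      smul_eq_mul]
  have hv : ‖v‖ ^ 2 ≤ 0 := by
    have := hmin (a + v)
    have := measureReal_le_one (μ := μ) (s := S)
    nlinarith [sq_nonneg ‖v‖]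
  exact norm_eq_zero.1 (pow_eq_zero_iff two_ne_zero |>.1 (le_antisymm hv (sq_nonneg _)))

variable [BorelSpace H] [SecondCountableTopology H] {N : ℕ} {Γ : Finset H} {f : H → H}

theorem IsOptimalQuantizer.isSelfConsistent (hμ : MemLp (fun x => x) 2 μ)
    (hΓ : IsOptimalQuantizer 2 N Γ μ) (hf : IsNearestProj Γ f) : IsSelfConsistent f μ := by
  classical
  intro A hA
  have hcell : ∀ a ∈ Γ, ∫ x in f ⁻¹' {a}, (x - f x) ∂μ = 0 := fun a ha => by
    rw [setIntegral_congr_fun (hf.1 (measurableSet_singleton a))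
      fun x hx => by rw [show f x = a from hx]]
    exact setIntegral_sub_eq_zero_of_forall_le hμ (hΓ.setIntegral_cell_le hμ hf ha)
  have hpre : f ⁻¹' A = ⋃ a ∈ Γ.filter (· ∈ A), f ⁻¹' {a} := by
    ext x
    simp [(hf.2 x).1]
  have hint : Integrable (fun x => x - f x) μ :=
    (hμ.integrable one_le_two).sub hf.integrable
  rw [hpre, integral_biUnion_finset _ (fun a _ => hf.1 (measurableSet_singleton a))
    (fun a _ b _ hab => (disjoint_singleton.2 hab).preimage f) fun a _ => hint.integrableOn]
  exact Finset.sum_eq_zero fun a ha => hcell a (Finset.mem_filter.1 ha).1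

end SelfConsistency

theorem stmt18_general (d N : ℕ) (μ ν : Measure (Ed d))
    [IsProbabilityMeasure μ]
    (hμ2 : Integrable (fun x => ‖x‖ ^ (2 : ℝ)) μ)
    (Γ : Finset (Ed d)) (hΓ : IsOptimalQuantizer 2 N Γ μ)
    (f : Ed d → Ed d) (hf : IsNearestProj Γ f)
    (Γ' : Finset (Ed d))
    (g : Ed d → ℝ → Ed d) (hgmeas : Measurable fun q : Ed d × ℝ => g q.1 q.2)
    (hgrange : ∀ y u, g y u ∈ Γ')
    (hgstat : ∀ y ∈ convexHull ℝ (Γ' : Set (Ed d)), ∫ u in Icc (0:ℝ) 1, g y u = y)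
    (hνsupp : ν ((convexHull ℝ (Γ' : Set (Ed d)))ᶜ) = 0)
    (π : Measure (Ed d × Ed d)) (hπ : IsMartingaleCoupling π μ ν) :
    IsMartingaleCoupling
      ((π.prod (volume.restrict (Icc (0:ℝ) 1))).map fun q => (f q.1.1, g q.1.2 q.2))
      (μ.map f)
      ((ν.prod (volume.restrict (Icc (0:ℝ) 1))).map fun q => g q.1 q.2) := by
  have hμ : MemLp (fun x => x) 2 μ := memLp_id_two_of_integrable_norm_rpow hμ2
  have : IsProbabilityMeasure (volume.restrict (Icc (0 : ℝ) 1)) := ⟨by simp⟩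
  refine hπ.map_of_isSelfConsistent (hμ.integrable one_le_two) hf.1 hf.integrable
    (hΓ.isSelfConsistent hμ hf) hgmeas (fun y u => norm_le_sum_norm_of_mem (hgrange y u)) ?_
  filter_upwards [measure_eq_zero_iff_ae_notMem.1 hνsupp] with y hy
  exact hgstat y (notMem_compl_iff.1 hy)

theorem stmt18 (d N K : ℕ) (μ ν : Measure (Ed d))
    [IsProbabilityMeasure μ] [IsProbabilityMeasure ν]
    (hμ2 : Integrable (fun x => ‖x‖ ^ (2 : ℝ)) μ)
    (hcvx : ConvexOrder μ ν)
    (hνc : ∃ Kc : Set (Ed d), IsCompact Kc ∧ ν Kcᶜ = 0)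
    (Γ : Finset (Ed d)) (hΓ : IsOptimalQuantizer 2 N Γ μ)
    (f : Ed d → Ed d) (hf : IsNearestProj Γ f)
    (Γ' : Finset (Ed d)) (hΓ'card : Γ'.card ≤ K)
    (g : Ed d → ℝ → Ed d) (hgmeas : Measurable fun q : Ed d × ℝ => g q.1 q.2)
    (hgrange : ∀ y u, g y u ∈ Γ')
    (hgstat : ∀ y ∈ convexHull ℝ (Γ' : Set (Ed d)), ∫ u in Icc (0:ℝ) 1, g y u = y)
    (hνsupp : ν ((convexHull ℝ (Γ' : Set (Ed d)))ᶜ) = 0)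
    (π : Measure (Ed d × Ed d)) (hπ : IsMartingaleCoupling π μ ν) :
    IsMartingaleCoupling
      ((π.prod (volume.restrict (Icc (0:ℝ) 1))).map fun q => (f q.1.1, g q.1.2 q.2))
      (μ.map f)
      ((ν.prod (volume.restrict (Icc (0:ℝ) 1))).map fun q => g q.1 q.2) :=
  stmt18_general d N μ ν hμ2 Γ hΓ f hf Γ' g hgmeas hgrange hgstat hνsupp π hπ
end
end
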